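/- arXiv:2411.12754 — 3 statements merged into one kernel-verified Lean document; each statement's English description precedes it below -/
import Mathlib

section
/- With h defined from binary digits by h(k) = Σ_{i≥1} β_i 2^{⌊(i−1)/2⌋}: if k ≡ 0 or 1 (mod 4) then h(k+2) = h(k) + 1, and if k ≡ 2 or 3 (mod 4) then h(k+2) ≤ h(k). -/
/-- `h k = Σ_{i≥1} β_i 2^{⌊(i−1)/2⌋}` where `β_i` are the binary digits of `k`. -/
def h (k : ℕ) : ℕ := ∑ i ∈ Finset.Icc 1 k, if k.testBit i then 2 ^ ((i - 1) / 2) else 0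

/-!
Shifting out the bit `β_0`, which `h` ignores, gives `h k = g (k / 2)` for
`g n = Σ_i β_i(n) 2^{⌊i/2⌋}` (`pairedBitSum`). Reading off the two lowest bits, `g` satisfies
`g n = β_0 + β_1 + 2 g (n / 4)`, from which `g (2q + 1) = g (2q) + 1` and, by induction,
`g (n + 1) ≤ g n + 1`; the latter bounds the carry in `g (2q + 2) ≤ g (2q + 1)`.
-/

open Finset

/-- Bits of `n` at positions `≥ n` vanish. -/
lemma sum_range_testBit_of_le {M : Type*} [AddCommMonoid M] (w : ℕ → M) {n N : ℕ}
    (hN : n ≤ N) :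
    ∑ i ∈ range N, (if n.testBit i then w i else 0) =
      ∑ i ∈ range n, (if n.testBit i then w i else 0) := by
  refine (sum_subset (range_subset_range.2 hN) fun i _ hi ↦ ?_).symm
  rw [Nat.testBit_eq_false_of_lt (Nat.lt_two_pow_self.trans_le
    (Nat.pow_le_pow_right two_pos (not_lt.1 (mem_range.not.1 hi))))]
  rfl

lemma ite_testBit_zero (n : ℕ) : (if n.testBit 0 then 1 else 0) = n % 2 := by
  rcases Nat.mod_two_eq_zero_or_one n with hn | hn <;> simp [Nat.testBit_zero, hn]

def pairedBitSum (n : ℕ) : ℕ := ∑ i ∈ range n, if n.testBit i then 2 ^ (i / 2) else 0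

lemma h_eq_pairedBitSum (k : ℕ) : h k = pairedBitSum (k / 2) := by
  rw [pairedBitSum, ← sum_range_testBit_of_le _ (Nat.div_le_self k 2), h,
    ← Ico_add_one_right_eq_Icc, sum_Ico_eq_sum_range, Nat.add_sub_cancel]
  refine sum_congr rfl fun i _ ↦ ?_
  rw [add_comm 1 i, Nat.add_sub_cancel, Nat.testBit_div_two]

lemma pairedBitSum_eq (n : ℕ) :
    pairedBitSum n = n % 2 + n / 2 % 2 + 2 * pairedBitSum (n / 4) := by
  rw [pairedBitSum, ← sum_range_testBit_of_le _ (Nat.le_add_right n 2),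
    sum_range_succ', sum_range_succ', pairedBitSum,
    ← sum_range_testBit_of_le _ (Nat.div_le_self n 4), mul_sum]
  have hbit0 : (if n.testBit 0 then 2 ^ (0 / 2) else 0) = n % 2 := ite_testBit_zero n
  have hbit1 : (if n.testBit (0 + 1) then 2 ^ ((0 + 1) / 2) else 0) = n / 2 % 2 := by
    rw [← Nat.testBit_div_two]
    exact ite_testBit_zero (n / 2)
  have hhigh : ∀ i, (if n.testBit (i + 1 + 1) then 2 ^ ((i + 1 + 1) / 2) else 0) =
      2 * (if (n / 4).testBit i then 2 ^ (i / 2) else 0) := fun i ↦ by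
    rw [show n / 4 = n / 2 ^ 2 by norm_num, Nat.testBit_div_two_pow,
      show (i + 1 + 1) / 2 = i / 2 + 1 by omega, pow_succ, mul_ite, mul_zero, mul_comm]
  simp only [hhigh, hbit0, hbit1]
  ring

lemma pairedBitSum_two_mul_add_one (q : ℕ) :
    pairedBitSum (2 * q + 1) = pairedBitSum (2 * q) + 1 := by
  rw [pairedBitSum_eq (2 * q + 1), pairedBitSum_eq (2 * q),
    show (2 * q + 1) / 4 = 2 * q / 4 by omega]
  omega

lemma pairedBitSum_succ_le (n : ℕ) : pairedBitSum (n + 1) ≤ pairedBitSum n + 1 := by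
  induction n using Nat.strong_induction_on with
  | _ n ih =>
    rw [pairedBitSum_eq (n + 1), pairedBitSum_eq n]
    by_cases hn : n % 4 = 3
    · rw [show (n + 1) / 4 = n / 4 + 1 by omega]
      have := ih (n / 4) (by omega)
      omega
    · rw [show (n + 1) / 4 = n / 4 by omega]
      omega

lemma pairedBitSum_two_mul_add_two_le (q : ℕ) :
    pairedBitSum (2 * q + 2) ≤ pairedBitSum (2 * q + 1) := by
  rw [pairedBitSum_eq (2 * q + 2), pairedBitSum_eq (2 * q + 1)]
  rcases Nat.even_or_odd q with ⟨m, rfl⟩ | ⟨m, rfl⟩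
  · rw [show (2 * (m + m) + 2) / 4 = (2 * (m + m) + 1) / 4 by omega]
    omega
  · rw [show (2 * (2 * m + 1) + 2) / 4 = m + 1 by omega,
      show (2 * (2 * m + 1) + 1) / 4 = m by omega]
    have := pairedBitSum_succ_le m
    omega

theorem h_add_two (k : ℕ) :
    ((k % 4 = 0 ∨ k % 4 = 1) → h (k + 2) = h k + 1) ∧
    ((k % 4 = 2 ∨ k % 4 = 3) → h (k + 2) ≤ h k) := by
  rw [h_eq_pairedBitSum, h_eq_pairedBitSum]
  refine ⟨fun hk ↦ ?_, fun hk ↦ ?_⟩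
  · rw [show (k + 2) / 2 = 2 * (k / 4) + 1 by omega, show k / 2 = 2 * (k / 4) by omega]
    exact pairedBitSum_two_mul_add_one _
  · rw [show (k + 2) / 2 = 2 * (k / 4) + 2 by omega, show k / 2 = 2 * (k / 4) + 1 by omega]
    exact pairedBitSum_two_mul_add_two_le _
end

section
/- For every odd natural number k ≥ 1, (h(k)+2)² ≤ (9/4)(k+1), with equality if and only if k = 4^a − 1 for some a ≥ 1, where h(k) = Σ_{i≥1} β_i 2^{⌊(i−1)/2⌋}. -/
open Finset

lemma h_eq_sum_range {n N : ℕ} (hN : n ≤ N) :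
    h n = ∑ i ∈ range N, if (n / 2).testBit i then 2 ^ (i / 2) else 0 := by
  have hzero : ∀ i ∈ Icc 1 N, i ∉ Icc 1 n →
      (if n.testBit i then 2 ^ ((i - 1) / 2) else 0) = 0 := by
    intro i _ hi
    rw [Nat.testBit_lt_two_pow (by grind [Nat.lt_two_pow_self]), if_neg Bool.false_ne_true]
  rw [h, sum_subset (Icc_subset_Icc_right hN) hzero, ← Ico_add_one_right_eq_Icc,
    sum_Ico_eq_sum_range]
  refine sum_congr (by simp) fun i _ => ?_
  rw [add_comm 1 i, Nat.testBit_succ, Nat.add_sub_cancel]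

lemma sum_range_add_two_testBit (m N : ℕ) :
    (∑ i ∈ range (N + 2), if m.testBit i then 2 ^ (i / 2) else 0) =
      m % 2 + m / 2 % 2 + 2 * ∑ i ∈ range N, if (m / 4).testBit i then 2 ^ (i / 2) else 0 := by
  have hbit (x : ℕ) : (if x.testBit 0 then 1 else 0) = x % 2 := by
    rw [Nat.testBit_zero]
    split_ifs <;> simp_all
  have hbit0 : (if m.testBit 0 then 2 ^ (0 / 2) else 0) = m % 2 := hbit m
  have hbit1 : (if m.testBit (0 + 1) then 2 ^ ((0 + 1) / 2) else 0) = m / 2 % 2 := by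
    rw [Nat.testBit_succ]
    exact hbit (m / 2)
  have hshift (i : ℕ) : (if m.testBit (i + 1 + 1) then 2 ^ ((i + 1 + 1) / 2) else 0) =
      2 * if (m / 4).testBit i then 2 ^ (i / 2) else 0 := by
    rw [Nat.testBit_div_two_pow (n := 2) m i, show (i + 1 + 1) / 2 = i / 2 + 1 by omega, pow_succ]
    split_ifs <;> ring
  rw [sum_range_succ', sum_range_succ', mul_sum, sum_congr rfl fun i _ => hshift i, hbit0, hbit1]
  ring

lemma h_eq_add_two_mul_h_div_four (n : ℕ) : h n = n / 2 % 2 + n / 4 % 2 + 2 * h (n / 4) := by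
  rw [h_eq_sum_range (N := n + 2) (by omega), h_eq_sum_range (N := n) (n := n / 4) (by omega),
    sum_range_add_two_testBit, Nat.div_div_eq_div_mul, Nat.div_div_eq_div_mul, Nat.div_div_eq_div_mul]

lemma one_le_h {n : ℕ} (hn : 2 ≤ n) : 1 ≤ h n := by
  induction n using Nat.strong_induction_on with
  | _ n ih =>
    rw [h_eq_add_two_mul_h_div_four]
    by_cases hbits : n / 2 % 2 = 0 ∧ n / 4 % 2 = 0
    · have := ih (n / 4) (by omega) (by omega)
      omega
    · omega

def defect (n : ℕ) : ℤ := 18 * ((n / 2 : ℕ) + 1) - 4 * ((h n : ℤ) + 2) ^ 2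

lemma defect_eq_four_mul {n : ℕ} (hn : n / 2 % 4 = 3) : defect n = 4 * defect (n / 4) := by
  have hhalf : n / 2 = 4 * (n / 4 / 2) + 3 := by omega
  have hh : h n = 2 + 2 * h (n / 4) := by rw [h_eq_add_two_mul_h_div_four]; omega
  rw [defect, defect, hh, hhalf]
  push_cast
  ring

lemma defect_pos {n : ℕ} (hn : n / 2 % 4 ≠ 3) (h4 : 4 ≤ n) (hq : 0 ≤ defect (n / 4)) :
    0 < defect n := by
  have hh : (h n : ℤ) = (n / 2 % 2 : ℕ) + (n / 4 % 2 : ℕ) + 2 * h (n / 4) := by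
    exact_mod_cast h_eq_add_two_mul_h_div_four n
  have hhalf : ((n / 2 : ℕ) : ℤ) = 4 * (n / 4 / 2 : ℕ) + 2 * (n / 4 % 2 : ℕ) + (n / 2 % 2 : ℕ) := by
    norm_cast; omega
  have hu : n / 4 % 2 = 0 → (1 : ℤ) ≤ h (n / 4) := fun h0 => by
    exact_mod_cast one_le_h (by omega)
  rw [defect] at hq ⊢
  -- `defect n - 4 * defect (n / 4)` is `32 u - 6`, `16 u + 10` or `16 u - 8` for `u = h (n / 4)`.
  rcases Nat.mod_two_eq_zero_or_one (n / 2) with b1 | b1 <;>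
    rcases Nat.mod_two_eq_zero_or_one (n / 4) with b2 | b2 <;>
    simp only [b1, b2, Nat.cast_zero, Nat.cast_one] at hh hhalf <;>
    rw [hh, hhalf]
  · linarith [hu b2]
  · linarith
  · linarith [hu b2]
  · omega

lemma defect_nonneg (n : ℕ) : 0 ≤ defect n := by
  induction n using Nat.strong_induction_on with
  | _ n ih =>
    rcases lt_or_ge n 4 with hn | hn
    · interval_cases n <;> decide
    · have hq := ih (n / 4) (by omega)
      by_cases h3 : n / 2 % 4 = 3
      · rw [defect_eq_four_mul h3]
        positivity
      · exact (defect_pos h3 hn hq).le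

lemma exists_two_mul_four_pow_iff {j : ℕ} (hj : 2 ≤ j) :
    (∃ a, j + 1 = 2 * 4 ^ a) ↔ j % 4 = 3 ∧ ∃ a, j / 4 + 1 = 2 * 4 ^ a := by
  constructor
  · rintro ⟨_ | a, ha⟩
    · omega
    · rw [pow_succ] at ha
      exact ⟨by omega, a, by omega⟩
  · rintro ⟨hj3, a, ha⟩
    exact ⟨a + 1, by rw [pow_succ]; omega⟩

lemma defect_eq_zero_iff (n : ℕ) : defect n = 0 ↔ ∃ a, n / 2 + 1 = 2 * 4 ^ a := by
  induction n using Nat.strong_induction_on with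
  | _ n ih =>
    rcases lt_or_ge n 4 with hn | hn
    · interval_cases n
      · exact iff_of_false (by decide) fun ⟨a, ha⟩ => by omega
      · exact iff_of_false (by decide) fun ⟨a, ha⟩ => by omega
      · exact iff_of_true (by decide) ⟨0, rfl⟩
      · exact iff_of_true (by decide) ⟨0, rfl⟩
    · rw [exists_two_mul_four_pow_iff (by omega)]
      by_cases h3 : n / 2 % 4 = 3
      · rw [defect_eq_four_mul h3, mul_eq_zero, ih (n / 4) (by omega),
          show n / 4 / 2 = n / 2 / 4 by omega, and_iff_right h3]
        simp only [OfNat.ofNat_ne_zero, false_or]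
      · exact iff_of_false (defect_pos h3 hn (defect_nonneg _)).ne' (by omega)

theorem h_max_characterization_general (k : ℕ) (hk : Odd k) :
    ((h k : ℝ) + 2) ^ 2 ≤ (9 / 4) * ((k : ℝ) + 1) ∧
    (((h k : ℝ) + 2) ^ 2 = (9 / 4) * ((k : ℝ) + 1) ↔
      ∃ a : ℕ, 1 ≤ a ∧ k = 4 ^ a - 1) := by
  have hk2 : 2 * (k / 2) + 1 = k := by have := Nat.odd_iff.mp hk; omega
  have hdefect : (defect k : ℝ) = 4 * ((9 / 4) * ((k : ℝ) + 1) - ((h k : ℝ) + 2) ^ 2) := by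
    have hkR : (k : ℝ) = 2 * (k / 2 : ℕ) + 1 := by exact_mod_cast hk2.symm
    rw [defect, hkR]
    simp only [Int.cast_sub, Int.cast_mul, Int.cast_add, Int.cast_pow, Int.cast_ofNat,
      Int.cast_one, Int.cast_natCast]
    ring
  have hzero : ((h k : ℝ) + 2) ^ 2 = (9 / 4) * ((k : ℝ) + 1) ↔ defect k = 0 := by
    rw [← Int.cast_eq_zero (α := ℝ), hdefect]
    constructor <;> intro <;> linarith
  refine ⟨?_, ?_⟩
  · have : (0 : ℝ) ≤ defect k := by exact_mod_cast defect_nonneg k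
    linarith
  · rw [hzero, defect_eq_zero_iff]
    constructor
    · rintro ⟨a, ha⟩
      exact ⟨a + 1, by omega, by rw [pow_succ]; omega⟩
    · rintro ⟨_ | a, ha, rfl⟩
      · omega
      · exact ⟨a, by rw [pow_succ] at hk2 ⊢; omega⟩

theorem h_max_characterization (k : ℕ) (hk : Odd k) (h1 : 1 ≤ k) :
    ((h k : ℝ) + 2) ^ 2 ≤ (9 / 4) * ((k : ℝ) + 1) ∧
    (((h k : ℝ) + 2) ^ 2 = (9 / 4) * ((k : ℝ) + 1) ↔
      ∃ a : ℕ, 1 ≤ a ∧ k = 4 ^ a - 1) :=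
  h_max_characterization_general k hk
end

section
/- Let Δ = Σ_{m≥0} q^{(2m+1)²} ∈ F₂[[q]] and T_p the mod-2 Hecke operator. If p is a prime with p ≡ 3 (mod 8), then T_p(Δ³) = Δ; if p is an odd prime with p ≢ 3 (mod 8), then T_p(Δ³) = 0. -/
open Classical in
/-- The reduction mod 2 of the Δ series: `Δ = Σ_{m≥0} q^{(2m+1)²}` in `F₂[[q]]`. -/
noncomputable def Delta : PowerSeries (ZMod 2) :=
  PowerSeries.mk fun n => if ∃ m : ℕ, n = (2 * m + 1) ^ 2 then 1 else 0

/-- The mod 2 Hecke operator `T_p` on `F₂[[q]]`. -/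
noncomputable def heckeT (p : ℕ) (f : PowerSeries (ZMod 2)) : PowerSeries (ZMod 2) :=
  PowerSeries.mk fun n =>
    PowerSeries.coeff (p * n) f +
      if p ∣ n then PowerSeries.coeff (n / p) f else 0

/-
Over `F₂` we have `Δ² = Δ(q²)`, so the coefficient of `qⁿ` in `Δ³ = Δ(q²) Δ(q)` is the parity of
the number of solutions of `x² + 2y² = n` in positive odd integers. Such solutions exist only for
`n ≡ 3 (mod 8)`. Let `r(n)` be the number of elements of norm `n` in `ℤ[√-2]`; for odd `n`, sign
changes give `r(n) = 4·#{x, y > 0} + 2·[n is a square]`, and for `n ≡ 3 (mod 8)` the positive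
solutions are the odd ones. The sequence `r` is a Hecke eigenvector: if `-2` is a square mod `p`
(that is, `p ≡ 1, 3 mod 8`), then `p = π π̄` by Thue's lemma, and multiplication by `π` and by `π̄`
gives `r(pn) + r(n/p) = 2 r(n)`; otherwise every element of norm divisible by `p` is divisible by
`p`, so `r(pn) = r(n/p)`. Dividing these relations by `4` and reducing mod `2` gives the result.
-/

open Finset PowerSeries

theorem Finset.sum_Icc_neg_eq_of_even {M : Type*} [AddCommMonoid M] {f : ℤ → M}
    (hf : ∀ x, f (-x) = f x) (N : ℕ) :
    ∑ x ∈ Icc (-N : ℤ) N, f x = f 0 + 2 • ∑ k ∈ Icc 1 N, f k := by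
  induction N with
  | zero => simp
  | succ N ih =>
    have hIcc : Icc (-(N + 1 : ℕ) : ℤ) (N + 1 : ℕ) =
        insert (-(N + 1 : ℕ) : ℤ) (insert ((N + 1 : ℕ) : ℤ) (Icc (-N : ℤ) N)) := by
      ext x
      simp only [mem_Icc, mem_insert]
      omega
    rw [hIcc, sum_insert (by simp; omega), sum_insert (by simp), ih, hf,
      sum_Icc_succ_top (by omega), smul_add, two_smul]
    abel

theorem Nat.sq_mod_eight_of_odd {a : ℕ} (ha : Odd a) : a ^ 2 % 8 = 1 := by
  obtain ⟨k, rfl⟩ := ha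
  obtain ⟨j, hj⟩ := Nat.even_mul_succ_self k
  have : (2 * k + 1) ^ 2 = 4 * (k * (k + 1)) + 1 := by ring
  omega

theorem Nat.sq_add_two_mul_sq_mod_eight_eq_three_iff (a b : ℕ) :
    (a ^ 2 + 2 * b ^ 2) % 8 = 3 ↔ Odd a ∧ Odd b := by
  refine ⟨fun h => ?_, fun ⟨ha, hb⟩ => by
    have := sq_mod_eight_of_odd ha
    have := sq_mod_eight_of_odd hb
    omega⟩
  rcases Nat.even_or_odd a with ⟨k, rfl⟩ | ha
  · have : (k + k) ^ 2 = 4 * k ^ 2 := by ring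
    omega
  rcases Nat.even_or_odd b with ⟨k, rfl⟩ | hb
  · have : (k + k) ^ 2 = 4 * k ^ 2 := by ring
    have := sq_mod_eight_of_odd ha
    omega
  exact ⟨ha, hb⟩

theorem Nat.mul_mod_eight_eq_div_mod_eight {p n : ℕ} (hp : Odd p) (h : p ∣ n) :
    p * n % 8 = n / p % 8 := by
  obtain ⟨k, rfl⟩ := h
  rw [Nat.mul_div_cancel_left _ hp.pos, ← mul_assoc, ← sq, Nat.mul_mod,
    Nat.sq_mod_eight_of_odd hp, one_mul, Nat.mod_mod]

theorem PowerSeries.pow_char_eq_expand {p : ℕ} [Fact p.Prime] (f : PowerSeries (ZMod p)) :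
    f ^ p = expand p (Fact.out : p.Prime).ne_zero f := by
  rw [← MvPowerSeries.map_frobenius_expand p (Fact.out : p.Prime).ne_zero, ZMod.frobenius_zmod]
  exact congrFun PowerSeries.map_id _

/-- Thue's lemma: pigeonhole on the values `u - a v` for `0 ≤ u, v ≤ √n`. -/
theorem ZMod.exists_intCast_eq_mul_of_natAbs_le_sqrt {n : ℕ} [NeZero n] (a : ZMod n) :
    ∃ x y : ℤ, (x ≠ 0 ∨ y ≠ 0) ∧ x.natAbs ≤ n.sqrt ∧ y.natAbs ≤ n.sqrt ∧
      (x : ZMod n) = a * y := by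
  let f : Fin (n.sqrt + 1) × Fin (n.sqrt + 1) → ZMod n := fun uv => uv.1.val - a * uv.2.val
  have hcard : Fintype.card (ZMod n) < Fintype.card (Fin (n.sqrt + 1) × Fin (n.sqrt + 1)) := by
    simpa [ZMod.card, ← sq] using Nat.lt_succ_sqrt' n
  obtain ⟨⟨u, v⟩, ⟨u', v'⟩, hne, heq⟩ := Fintype.exists_ne_map_eq_of_card_lt f hcard
  refine ⟨(u : ℤ) - u', (v : ℤ) - v', ?_, by omega, by omega, ?_⟩
  · by_contra! h
    exact hne (Prod.ext (Fin.ext (by dsimp; omega)) (Fin.ext (by dsimp; omega)))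
  · push_cast
    linear_combination heq

theorem Nat.Prime.exists_sq_add_two_mul_sq {p : ℕ} (hp : p.Prime) (h : IsSquare (-2 : ZMod p)) :
    ∃ c d : ℤ, c ^ 2 + 2 * d ^ 2 = p := by
  have := Fact.mk hp
  obtain ⟨a, ha⟩ := h
  obtain ⟨x, y, hxy, hx, hy, hxay⟩ := ZMod.exists_intCast_eq_mul_of_natAbs_le_sqrt a
  obtain ⟨k, hk⟩ : (p : ℤ) ∣ x ^ 2 + 2 * y ^ 2 := by
    rw [← ZMod.intCast_zmod_eq_zero_iff_dvd]
    push_cast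
    rw [hxay]
    linear_combination (-(y : ZMod p) ^ 2) * ha
  have hsqrt : p.sqrt ^ 2 < p := (Nat.sqrt_le' p).lt_of_ne fun h =>
    hp.prime.irreducible.not_isSquare ⟨p.sqrt, ((sq _).symm.trans h).symm⟩
  have hx2 : x ^ 2 < p := by
    rw [← Int.natAbs_sq]
    exact_mod_cast (Nat.pow_le_pow_left hx 2).trans_lt hsqrt
  have hy2 : y ^ 2 < p := by
    rw [← Int.natAbs_sq]
    exact_mod_cast (Nat.pow_le_pow_left hy 2).trans_lt hsqrt
  have hpos : 0 < x ^ 2 + 2 * y ^ 2 := by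
    rcases hxy with h | h <;> positivity
  have hp0 : (0 : ℤ) < p := by exact_mod_cast hp.pos
  -- `x² + 2y²` is a positive multiple of `p` below `3p`; if it is `2p`, then `x` is even.
  obtain rfl | rfl : k = 1 ∨ k = 2 := by
    have : 0 < k := pos_of_mul_pos_right (hk ▸ hpos) hp0.le
    have : k < 3 := lt_of_mul_lt_mul_left (by linarith) hp0.le
    omega
  · exact ⟨x, y, by linarith⟩
  · obtain ⟨t, rfl⟩ : Even x := by
      rw [← Int.even_pow' two_ne_zero]
      exact ⟨p - y ^ 2, by linarith⟩
    exact ⟨y, t, by linarith⟩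

instance : IsDomain (ℤ√(-2)) :=
  have : NoZeroDivisors (ℤ√(-2)) := ⟨fun {a b} h => by
    simpa only [← Zsqrtd.norm_eq_zero_iff (by norm_num : (-2 : ℤ) < 0), Zsqrtd.norm_mul,
      Zsqrtd.norm_zero, mul_eq_zero] using congrArg Zsqrtd.norm h⟩
  NoZeroDivisors.to_isDomain _

def heckeCard {α : Type*} (p : ℕ) (s : ℕ → Finset α) (n : ℕ) : ℕ :=
  #(s (p * n)) + if p ∣ n then #(s (n / p)) else 0

namespace SqAddTwoSq

theorem norm_eq (z : ℤ√(-2)) : z.norm = z.re ^ 2 + 2 * z.im ^ 2 := by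
  rw [Zsqrtd.norm_def]
  ring

def toZsqrtd : ℤ × ℤ ↪ ℤ√(-2) :=
  ⟨fun z => ⟨z.1, z.2⟩, fun z w h => by simpa [Zsqrtd.ext_iff, Prod.ext_iff] using h⟩

noncomputable def reps (n : ℕ) : Finset (ℤ√(-2)) :=
  ((Icc (-n : ℤ) n ×ˢ Icc (-n : ℤ) n).filter fun z => z.1 ^ 2 + 2 * z.2 ^ 2 = (n : ℤ)).map
    toZsqrtd

theorem mem_reps {n : ℕ} {z : ℤ√(-2)} : z ∈ reps n ↔ z.norm = n := by
  rw [norm_eq]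
  constructor
  · intro h
    obtain ⟨w, hw, rfl⟩ := mem_map.1 h
    exact (mem_filter.1 hw).2
  · intro h
    have := Int.natAbs_le_self_sq z.re
    have := Int.natAbs_le_self_sq z.im
    have := sq_nonneg z.re
    have := sq_nonneg z.im
    refine mem_map.2 ⟨(z.re, z.im), mem_filter.2 ⟨?_, h⟩, rfl⟩
    simp only [mem_product, mem_Icc]
    omega

def posReps (n : ℕ) : Finset (ℕ × ℕ) :=
  (Icc 1 n ×ˢ Icc 1 n).filter fun z => z.1 ^ 2 + 2 * z.2 ^ 2 = n

theorem mem_posReps {n : ℕ} {z : ℕ × ℕ} :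
    z ∈ posReps n ↔ 0 < z.1 ∧ 0 < z.2 ∧ z.1 ^ 2 + 2 * z.2 ^ 2 = n := by
  simp only [posReps, mem_filter, mem_product, mem_Icc]
  have := Nat.le_self_pow two_ne_zero z.1
  have := Nat.le_self_pow two_ne_zero z.2
  constructor
  · rintro ⟨⟨⟨h1, -⟩, h2, -⟩, h⟩
    exact ⟨h1, h2, h⟩
  · rintro ⟨h1, h2, h⟩
    exact ⟨⟨⟨h1, by omega⟩, h2, by omega⟩, h⟩

def oddReps (n : ℕ) : Finset (ℕ × ℕ) :=
  (posReps n).filter fun z => Odd z.1 ∧ Odd z.2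

theorem card_reps_of_odd {n : ℕ} (hn : Odd n) :
    #(reps n) = 4 * #(posReps n) + 2 * #((Icc 1 n).filter (· ^ 2 = n)) := by
  have hn0 : ∀ b : ℤ, 2 * b ^ 2 ≠ n := fun b h => by
    obtain ⟨k, rfl⟩ := hn
    push_cast at h
    omega
  calc #(reps n)
      = ∑ x ∈ Icc (-n : ℤ) n, ∑ y ∈ Icc (-n : ℤ) n,
          if x ^ 2 + 2 * y ^ 2 = (n : ℤ) then 1 else 0 := by
        rw [reps, card_map, card_filter, sum_product]
    _ = ∑ x ∈ Icc (-n : ℤ) n, ((if x ^ 2 = (n : ℤ) then 1 else 0) +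
          2 • ∑ b ∈ Icc 1 n, if x ^ 2 + 2 * (b : ℤ) ^ 2 = n then 1 else 0) :=
        sum_congr rfl fun x _ => by
          rw [sum_Icc_neg_eq_of_even (fun y => by rw [neg_sq])]
          simp
    _ = 2 • ∑ a ∈ Icc 1 n, ((if (a : ℤ) ^ 2 = n then 1 else 0) +
          2 • ∑ b ∈ Icc 1 n, if (a : ℤ) ^ 2 + 2 * (b : ℤ) ^ 2 = n then 1 else 0) := by
        rw [sum_Icc_neg_eq_of_even (fun x => by rw [neg_sq])]
        simp [hn0, (Nat.cast_ne_zero.2 hn.pos.ne').symm]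
    _ = 4 * #(posReps n) + 2 * #((Icc 1 n).filter (· ^ 2 = n)) := by
        rw [posReps, card_filter, card_filter, sum_product, sum_add_distrib, ← smul_sum]
        simp only [smul_eq_mul]
        norm_cast
        ring

theorem card_oddReps_eq_zero {n : ℕ} (h : n % 8 ≠ 3) : #(oddReps n) = 0 :=
  card_eq_zero.2 <| filter_eq_empty_iff.2 fun _ hz hodd =>
    h ((mem_posReps.1 hz).2.2 ▸ (Nat.sq_add_two_mul_sq_mod_eight_eq_three_iff _ _).2 hodd)

theorem card_reps_eq_four_mul_card_oddReps {n : ℕ} (h : n % 8 = 3) :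
    #(reps n) = 4 * #(oddReps n) := by
  have hn : Odd n := Nat.odd_iff.2 (by omega)
  rw [card_reps_of_odd hn, oddReps, filter_true_of_mem fun z hz =>
      (Nat.sq_add_two_mul_sq_mod_eight_eq_three_iff _ _).1 ((mem_posReps.1 hz).2.2 ▸ h),
    filter_false_of_mem fun a _ ha => ?_, card_empty, mul_zero, add_zero]
  have := Nat.sq_mod_eight_of_odd ((Nat.odd_pow_iff two_ne_zero).1 (ha ▸ hn))
  omega

theorem heckeCard_oddReps_eq_zero {p n : ℕ} (hp : Odd p) (h : p * n % 8 ≠ 3) :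
    heckeCard p oddReps n = 0 := by
  rw [heckeCard, card_oddReps_eq_zero h, zero_add]
  split_ifs with hd
  · exact card_oddReps_eq_zero (Nat.mul_mod_eight_eq_div_mod_eight hp hd ▸ h)
  · rfl

theorem four_mul_heckeCard_oddReps {p n : ℕ} (hp : Odd p) (h : p * n % 8 = 3) :
    4 * heckeCard p oddReps n = heckeCard p reps n := by
  rw [heckeCard, heckeCard, mul_add, card_reps_eq_four_mul_card_oddReps h]
  split_ifs with hd
  · rw [card_reps_eq_four_mul_card_oddReps (Nat.mul_mod_eight_eq_div_mod_eight hp hd ▸ h)]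
  · rfl

theorem natCast_dvd_iff {p : ℕ} (z : ℤ√(-2)) :
    (p : ℤ√(-2)) ∣ z ↔ (p : ℤ) ∣ z.re ∧ (p : ℤ) ∣ z.im := by
  rw [← Int.cast_natCast, Zsqrtd.intCast_dvd]

open Classical in
theorem card_filter_natCast_dvd_reps_mul {p : ℕ} (hp : p.Prime) (n : ℕ) :
    #((reps (p * n)).filter ((p : ℤ√(-2)) ∣ ·)) = if p ∣ n then #(reps (n / p)) else 0 := by
  have hp0 : (p : ℤ) ≠ 0 := by exact_mod_cast hp.ne_zero
  have hnorm (w : ℤ√(-2)) : ((p : ℤ√(-2)) * w).norm = p * (p * w.norm) := by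
    rw [Zsqrtd.norm_mul, Zsqrtd.norm_natCast]
    ring
  split_ifs with h
  · obtain ⟨k, rfl⟩ := h
    rw [Nat.mul_div_cancel_left _ hp.pos, ← card_image_of_injective (reps k)
      (mul_right_injective₀ (Nat.cast_ne_zero.2 hp.ne_zero))]
    congr 1
    ext z
    simp only [mem_filter, mem_image, mem_reps]
    constructor
    · rintro ⟨hz, w, rfl⟩
      refine ⟨w, ?_, rfl⟩
      rw [hnorm] at hz
      push_cast at hz
      exact mul_left_cancel₀ hp0 (mul_left_cancel₀ hp0 hz)
    · rintro ⟨w, hw, rfl⟩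
      exact ⟨by rw [hnorm, hw]; push_cast; ring, dvd_mul_right _ _⟩
  · refine card_eq_zero.2 (filter_eq_empty_iff.2 fun z hz ⟨w, hw⟩ => h ?_)
    rw [mem_reps, hw, hnorm] at hz
    push_cast at hz
    exact Int.natCast_dvd_natCast.1 ⟨_, (mul_left_cancel₀ hp0 hz).symm⟩

section Split

variable {p n : ℕ} {π z : ℤ√(-2)}

theorem mul_mem_reps (hπ : π.norm = p) (hz : z ∈ reps n) : π * z ∈ reps (p * n) := by
  rw [mem_reps] at hz ⊢
  rw [Zsqrtd.norm_mul, hπ, hz, Nat.cast_mul]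

theorem card_image_mul_reps (hπ : π.norm = p) (hp : p ≠ 0) :
    #((reps n).image (π * ·)) = #(reps n) := by
  refine card_image_of_injective _ (mul_right_injective₀ fun h => hp ?_)
  simpa [h] using hπ.symm

theorem mem_image_mul_reps_iff (hπ : π.norm = p) (hp : p ≠ 0) :
    z ∈ (reps n).image (π * ·) ↔ z ∈ reps (p * n) ∧ (p : ℤ√(-2)) ∣ star π * z := by
  have hπp : star π * π = p := by rw [mul_comm, ← Zsqrtd.norm_eq_mul_conj, hπ]; rfl
  constructor
  · intro h
    obtain ⟨w, hw, rfl⟩ := mem_image.1 h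
    exact ⟨mul_mem_reps hπ hw, w, by rw [← mul_assoc, hπp]⟩
  · rintro ⟨hz, w, hw⟩
    have hπ0 : star π ≠ 0 := fun h => hp (by simpa [h] using hπp.symm)
    have hzw : z = π * w := mul_left_cancel₀ hπ0 (by rw [hw, ← mul_assoc, hπp])
    refine mem_image.2 ⟨w, ?_, hzw.symm⟩
    rw [mem_reps, hzw, Zsqrtd.norm_mul, hπ] at hz
    rw [mem_reps]
    exact mul_left_cancel₀ (by exact_mod_cast hp) (hz.trans (by push_cast; ring))

theorem natCast_dvd_of_dvd_norm_of_dvd_im (hp : p.Prime) (hn : (p : ℤ) ∣ z.norm)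
    (him : (p : ℤ) ∣ z.im) : (p : ℤ√(-2)) ∣ z := by
  refine (natCast_dvd_iff z).2 ⟨(Nat.prime_iff_prime_int.1 hp).dvd_of_dvd_pow (n := 2) ?_, him⟩
  rw [norm_eq] at hn
  simpa using hn.sub ((him.pow two_ne_zero).mul_left 2)

theorem dvd_star_mul_or_dvd_mul (hp : p.Prime) (hπ : π.norm = p) (hz : z ∈ reps (p * n)) :
    (p : ℤ√(-2)) ∣ star π * z ∨ (p : ℤ√(-2)) ∣ π * z := by
  rw [mem_reps] at hz
  have hprod : (star π * z).im * (π * z).im = p * (z.im ^ 2 - π.im ^ 2 * n) := by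
    simp only [Zsqrtd.im_mul, Zsqrtd.re_star, Zsqrtd.im_star]
    rw [norm_eq] at hz hπ
    push_cast at hz
    linear_combination z.im ^ 2 * hπ - π.im ^ 2 * hz
  have hdvd_norm (w : ℤ√(-2)) (hw : w.norm = p) : (p : ℤ) ∣ (w * z).norm :=
    ⟨p * n, by rw [Zsqrtd.norm_mul, hw, hz]; push_cast; ring⟩
  rcases (Nat.prime_iff_prime_int.1 hp).dvd_mul.1 ⟨_, hprod⟩ with h | h
  · exact .inl <| natCast_dvd_of_dvd_norm_of_dvd_im hp
      (hdvd_norm _ (by rw [Zsqrtd.norm_conj, hπ])) h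
  · exact .inr <| natCast_dvd_of_dvd_norm_of_dvd_im hp (hdvd_norm _ hπ) h

theorem not_dvd_two_mul_re (hp : p.Prime) (hodd : Odd p) (hπ : π.norm = p) :
    ¬(p : ℤ) ∣ 2 * π.re := by
  have hp2 : ¬(p : ℤ) ∣ 2 := fun h => by
    have := Int.le_of_dvd two_pos h
    have := hp.two_le
    obtain ⟨j, rfl⟩ := hodd
    omega
  intro h
  obtain ⟨k, hk⟩ := ((Nat.prime_iff_prime_int.1 hp).dvd_mul.1 h).resolve_left hp2
  rw [norm_eq, hk] at hπ
  rcases eq_or_ne k 0 with rfl | hk0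
  · obtain ⟨j, rfl⟩ := hodd
    rw [mul_zero, zero_pow two_ne_zero, zero_add] at hπ
    push_cast at hπ
    omega
  · have hk2 : 0 < k ^ 2 := by positivity
    have hp2 : (2 : ℤ) ≤ p := by exact_mod_cast hp.two_le
    nlinarith [mul_le_mul_of_nonneg_left (show 1 ≤ k ^ 2 by omega) (sq_nonneg (p : ℤ)),
      sq_nonneg π.im]

theorem natCast_dvd_of_dvd_star_mul_of_dvd_mul (hp : p.Prime) (hodd : Odd p) (hπ : π.norm = p)
    (h₁ : (p : ℤ√(-2)) ∣ star π * z) (h₂ : (p : ℤ√(-2)) ∣ π * z) : (p : ℤ√(-2)) ∣ z := by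
  have hsum : star π * z + π * z = ((2 * π.re : ℤ) : ℤ√(-2)) * z := by
    rw [← add_mul]
    congr 1
    ext <;> simp [two_mul]
  have h := (natCast_dvd_iff _).1 (hsum ▸ dvd_add h₁ h₂)
  rw [Zsqrtd.re_smul, Zsqrtd.im_smul] at h
  have hpP := Nat.prime_iff_prime_int.1 hp
  have hc := not_dvd_two_mul_re hp hodd hπ
  exact (natCast_dvd_iff z).2
    ⟨(hpP.dvd_mul.1 h.1).resolve_left hc, (hpP.dvd_mul.1 h.2).resolve_left hc⟩

open Classical in
theorem heckeCard_reps_eq_two_mul_card_reps (hp : p.Prime) (hodd : Odd p) (hπ : π.norm = p)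
    (n : ℕ) : heckeCard p reps n = 2 * #(reps n) := by
  have hπ' : (star π).norm = p := by rw [Zsqrtd.norm_conj, hπ]
  have hunion : (reps n).image (π * ·) ∪ (reps n).image (star π * ·) = reps (p * n) := by
    ext z
    rw [mem_union, mem_image_mul_reps_iff hπ hp.ne_zero, mem_image_mul_reps_iff hπ' hp.ne_zero,
      star_star]
    exact ⟨fun h => h.elim And.left And.left,
      fun hz => (dvd_star_mul_or_dvd_mul hp hπ hz).imp (⟨hz, ·⟩) (⟨hz, ·⟩)⟩
  have hinter : (reps n).image (π * ·) ∩ (reps n).image (star π * ·) =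
      (reps (p * n)).filter ((p : ℤ√(-2)) ∣ ·) := by
    ext z
    rw [mem_inter, mem_filter, mem_image_mul_reps_iff hπ hp.ne_zero,
      mem_image_mul_reps_iff hπ' hp.ne_zero, star_star]
    exact ⟨fun ⟨⟨hz, h₁⟩, _, h₂⟩ => ⟨hz, natCast_dvd_of_dvd_star_mul_of_dvd_mul hp hodd hπ h₁ h₂⟩,
      fun ⟨hz, h⟩ => ⟨⟨hz, h.mul_left _⟩, hz, h.mul_left _⟩⟩
  rw [heckeCard, ← card_filter_natCast_dvd_reps_mul hp, ← hinter, ← hunion,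
    card_union_add_card_inter, card_image_mul_reps hπ hp.ne_zero,
    card_image_mul_reps hπ' hp.ne_zero, two_mul]

end Split

theorem natCast_dvd_of_mem_reps_mul {p n : ℕ} {z : ℤ√(-2)} (hp : p.Prime)
    (h : ¬IsSquare (-2 : ZMod p)) (hz : z ∈ reps (p * n)) : (p : ℤ√(-2)) ∣ z := by
  have := Fact.mk hp
  rw [mem_reps, norm_eq] at hz
  have hz' : (z.re : ZMod p) ^ 2 + 2 * (z.im : ZMod p) ^ 2 = 0 := by
    exact_mod_cast (ZMod.intCast_zmod_eq_zero_iff_dvd _ p).2 ⟨n, by rw [hz]; push_cast; ring⟩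
  have him : (z.im : ZMod p) = 0 := by
    by_contra him
    exact h ⟨z.re / z.im, by field_simp; linear_combination -hz'⟩
  have hre : (z.re : ZMod p) = 0 := by
    rw [him] at hz'
    simpa using hz'
  rw [natCast_dvd_iff, ← ZMod.intCast_zmod_eq_zero_iff_dvd, ← ZMod.intCast_zmod_eq_zero_iff_dvd]
  exact ⟨hre, him⟩

open Classical in
theorem heckeCard_reps_eq_two_mul_card_reps_mul {p : ℕ} (hp : p.Prime)
    (h : ¬IsSquare (-2 : ZMod p)) (n : ℕ) : heckeCard p reps n = 2 * #(reps (p * n)) := by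
  rw [heckeCard, two_mul, ← card_filter_natCast_dvd_reps_mul hp,
    filter_true_of_mem fun _ hz => natCast_dvd_of_mem_reps_mul hp h hz]

end SqAddTwoSq

open SqAddTwoSq

open Classical in
theorem coeff_Delta (n : ℕ) : coeff n Delta = if ∃ a, Odd a ∧ a ^ 2 = n then 1 else 0 := by
  rw [Delta, coeff_mk]
  congr 1
  simp [Odd, eq_comm]

open Classical in
theorem coeff_expand_two_Delta (n : ℕ) :
    coeff n (expand 2 two_ne_zero Delta) = if ∃ b, Odd b ∧ 2 * b ^ 2 = n then 1 else 0 := by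
  rw [coeff_expand, coeff_Delta]
  by_cases h : 2 ∣ n
  · obtain ⟨k, rfl⟩ := h
    simp
  · rw [if_neg h, if_neg]
    rintro ⟨b, -, rfl⟩
    exact h (dvd_mul_right 2 _)

theorem coeff_Delta_eq_zero_of_mod_eight_ne_one {n : ℕ} (h : n % 8 ≠ 1) :
    coeff n Delta = 0 := by
  rw [coeff_Delta, if_neg]
  rintro ⟨a, ha, rfl⟩
  exact h (Nat.sq_mod_eight_of_odd ha)

theorem coeff_Delta_of_odd {n : ℕ} (hn : Odd n) :
    coeff n Delta = #((Icc 1 n).filter (· ^ 2 = n)) := by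
  rw [coeff_Delta]
  split_ifs with h
  · obtain ⟨a, ha, rfl⟩ := h
    have : (Icc 1 (a ^ 2)).filter (· ^ 2 = a ^ 2) = {a} := by
      ext x
      simp only [mem_filter, mem_Icc, mem_singleton]
      refine ⟨fun ⟨_, hx⟩ => Nat.pow_left_injective two_ne_zero hx, ?_⟩
      rintro rfl
      exact ⟨⟨ha.pos, Nat.le_self_pow two_ne_zero x⟩, rfl⟩
    rw [this, card_singleton, Nat.cast_one]
  · rw [filter_false_of_mem fun x _ hx => h ⟨x, ?_, hx⟩, card_empty, Nat.cast_zero]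
    exact (Nat.odd_pow_iff two_ne_zero).1 (hx ▸ hn)

theorem coeff_Delta_cube (n : ℕ) : coeff n (Delta ^ 3) = (#(oddReps n) : ZMod 2) := by
  classical
  rw [pow_succ Delta 2, PowerSeries.pow_char_eq_expand, coeff_mul]
  simp only [coeff_expand_two_Delta, coeff_Delta, ite_zero_mul_ite_zero, mul_one]
  rw [sum_boole]
  congr 1
  symm
  refine card_nbij (fun z => (2 * z.2 ^ 2, z.1 ^ 2)) ?_ ?_ ?_
  · intro z hz
    obtain ⟨⟨-, -, hz⟩, ha, hb⟩ := by
      simpa only [oddReps, mem_coe, mem_filter, mem_posReps] using hz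
    simp only [mem_coe, mem_filter, HasAntidiagonal.mem_antidiagonal]
    exact ⟨by omega, ⟨z.2, hb, rfl⟩, ⟨z.1, ha, rfl⟩⟩
  · intro z _ w _ h
    simp only [Prod.mk.injEq] at h
    exact Prod.ext (Nat.pow_left_injective two_ne_zero h.2)
      (Nat.pow_left_injective two_ne_zero (show z.2 ^ 2 = w.2 ^ 2 by omega))
  · rintro ⟨i, j⟩ hij
    obtain ⟨hij, ⟨b, hb, rfl⟩, ⟨a, ha, rfl⟩⟩ := by
      simpa only [mem_coe, mem_filter, HasAntidiagonal.mem_antidiagonal] using hij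
    refine ⟨(a, b), ?_, rfl⟩
    simp only [oddReps, mem_coe, mem_filter, mem_posReps]
    exact ⟨⟨ha.pos, hb.pos, by omega⟩, ha, hb⟩

theorem coeff_heckeT_Delta_cube (p n : ℕ) :
    coeff n (heckeT p (Delta ^ 3)) = (heckeCard p oddReps n : ZMod 2) := by
  simp only [heckeT, coeff_mk, coeff_Delta_cube, heckeCard]
  push_cast
  rfl

theorem coeff_heckeT_Delta_cube_of_isSquare {p : ℕ} (hp : p.Prime) (hodd : Odd p)
    (h : IsSquare (-2 : ZMod p)) (n : ℕ) :
    coeff n (heckeT p (Delta ^ 3)) = if p % 8 = 3 then coeff n Delta else 0 := by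
  have := Fact.mk hp
  have h8 := (ZMod.exists_sq_eq_neg_two_iff (p := p) (by rintro rfl; contradiction)).1 h
  obtain ⟨c, d, hcd⟩ := hp.exists_sq_add_two_mul_sq h
  have hπ : (⟨c, d⟩ : ℤ√(-2)).norm = p := by rw [norm_eq]; exact hcd
  have hmod := Nat.mul_mod p n 8
  rw [coeff_heckeT_Delta_cube]
  by_cases hpn : p * n % 8 = 3
  · have hn : Odd n := (Nat.odd_mul.1 (Nat.odd_iff.2 (by omega : p * n % 2 = 1))).2
    have key : heckeCard p oddReps n = 2 * #(posReps n) + #((Icc 1 n).filter (· ^ 2 = n)) := by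
      have := four_mul_heckeCard_oddReps hodd hpn
      rw [heckeCard_reps_eq_two_mul_card_reps hp hodd hπ, card_reps_of_odd hn] at this
      omega
    rw [key, Nat.cast_add, Nat.cast_mul, ← coeff_Delta_of_odd hn, Nat.cast_ofNat,
      show (2 : ZMod 2) = 0 from rfl, zero_mul, zero_add]
    split_ifs with h3
    · rfl
    · rw [h8.resolve_right h3, one_mul, Nat.mod_mod] at hmod
      exact coeff_Delta_eq_zero_of_mod_eight_ne_one (by omega)
  · rw [heckeCard_oddReps_eq_zero hodd hpn, Nat.cast_zero]
    split_ifs with h3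
    · rw [h3] at hmod
      exact (coeff_Delta_eq_zero_of_mod_eight_ne_one (by omega)).symm
    · rfl

theorem coeff_heckeT_Delta_cube_of_not_isSquare {p : ℕ} (hp : p.Prime) (hodd : Odd p)
    (h : ¬IsSquare (-2 : ZMod p)) (n : ℕ) : coeff n (heckeT p (Delta ^ 3)) = 0 := by
  rw [coeff_heckeT_Delta_cube]
  by_cases hpn : p * n % 8 = 3
  · have key : heckeCard p oddReps n = 2 * #(oddReps (p * n)) := by
      have := four_mul_heckeCard_oddReps hodd hpn
      rw [heckeCard_reps_eq_two_mul_card_reps_mul hp h, card_reps_eq_four_mul_card_oddReps hpn]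
        at this
      omega
    rw [key, Nat.cast_mul, Nat.cast_ofNat, show (2 : ZMod 2) = 0 from rfl, zero_mul]
  · rw [heckeCard_oddReps_eq_zero hodd hpn, Nat.cast_zero]

theorem heckeT_Delta_cube (p : ℕ) (hp : p.Prime) (hodd : Odd p) :
    (p % 8 = 3 → heckeT p (Delta ^ 3) = Delta) ∧
    (p % 8 ≠ 3 → heckeT p (Delta ^ 3) = 0) := by
  have hcoeff (n : ℕ) :
      coeff n (heckeT p (Delta ^ 3)) = if p % 8 = 3 then coeff n Delta else 0 := by
    by_cases h : IsSquare (-2 : ZMod p)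
    · exact coeff_heckeT_Delta_cube_of_isSquare hp hodd h n
    · have := Fact.mk hp
      have h3 : p % 8 ≠ 3 := fun h3 =>
        h ((ZMod.exists_sq_eq_neg_two_iff (by rintro rfl; contradiction)).2 (.inr h3))
      rw [coeff_heckeT_Delta_cube_of_not_isSquare hp hodd h, if_neg h3]
  exact ⟨fun h3 => ext fun n => by rw [hcoeff, if_pos h3],
    fun h3 => ext fun n => by rw [hcoeff, if_neg h3, map_zero]⟩
end
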